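/- arXiv:2512.06580 — 6 statements merged into one kernel-verified Lean document; each statement's English description precedes it below -/
import Mathlib

section
/- Let $K$ be a totally disconnected compact Hausdorff space with no $G_\delta$ points, and let $\mathcal{A}$ be a countable Boolean subalgebra of the algebra $\mathrm{Clop}(K)$ of clopen subsets of $K$. Then for every ultrafilter $\mathcal{U}$ of $\mathcal{A}$ there exists a clopen set $V \in \mathrm{Clop}(K) \setminus \mathcal{A}$ such that for every $U \in \mathcal{U}$ both $U \cap V$ and $U \cap (K \setminus V)$ are nonempty. -/
/-- For a totally disconnected compact Hausdorff space `K` with no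
`Gδ` points and a countable Boolean subalgebra `𝒜` of `Clop(K)`, every
ultrafilter `𝒰` of `𝒜` is split by some clopen `V ∉ 𝒜`. -/
theorem stmt_0 {K : Type*} [TopologicalSpace K] [CompactSpace K] [T2Space K]
    (hbasis : TopologicalSpace.IsTopologicalBasis {U : Set K | IsClopen U})
    (hGδ : ∀ x : K, ¬ ∃ U : ℕ → Set K, (∀ n, IsOpen (U n)) ∧ (⋂ n, U n) = {x})
    (𝒜 : Set (Set K)) (h𝒜clopen : ∀ A ∈ 𝒜, IsClopen A)
    (h𝒜count : 𝒜.Countable)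
    (hbot : (∅ : Set K) ∈ 𝒜) (htop : (Set.univ : Set K) ∈ 𝒜)
    (hinter : ∀ A ∈ 𝒜, ∀ B ∈ 𝒜, A ∩ B ∈ 𝒜)
    (hcompl : ∀ A ∈ 𝒜, Aᶜ ∈ 𝒜)
    (𝒰 : Set (Set K)) (h𝒰sub : 𝒰 ⊆ 𝒜) (h𝒰bot : (∅ : Set K) ∉ 𝒰)
    (h𝒰inter : ∀ A ∈ 𝒰, ∀ B ∈ 𝒰, A ∩ B ∈ 𝒰)
    (h𝒰up : ∀ A ∈ 𝒰, ∀ B ∈ 𝒜, A ⊆ B → B ∈ 𝒰)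
    (h𝒰ultra : ∀ A ∈ 𝒜, A ∈ 𝒰 ∨ Aᶜ ∈ 𝒰) :
    ∃ V : Set K, IsClopen V ∧ V ∉ 𝒜 ∧
      ∀ U ∈ 𝒰, (U ∩ V).Nonempty ∧ (U ∩ Vᶜ).Nonempty := by
  -- univ ∈ 𝒰
  classical
  have huniv : (Set.univ : Set K) ∈ 𝒰 := by
    rcases h𝒰ultra ∅ hbot with h | h
    · exact absurd h h𝒰bot
    · simpa using h
  have h𝒰ne : 𝒰.Nonempty := ⟨_, huniv⟩
  -- finite intersections of 𝒰 lie in 𝒰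
  have hfin : ∀ s : Finset (Set K), ↑s ⊆ 𝒰 → ⋂₀ (↑s : Set (Set K)) ∈ 𝒰 := by
    intro s
    induction s using Finset.induction_on with
    | empty => intro _; simpa using huniv
    | @insert a t _ ih =>
      intro hs
      have ha : a ∈ 𝒰 := hs (Finset.mem_insert_self a t)
      have ht : (↑t : Set (Set K)) ⊆ 𝒰 := fun x hx => hs (Finset.mem_insert_of_mem hx)
      have := h𝒰inter a ha _ (ih ht)
      simpa [Set.sInter_insert] using this
  -- ⋂₀ 𝒰 is nonempty, by compactness
  have hne : (⋂₀ 𝒰).Nonempty := by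
    by_contra h
    rw [Set.not_nonempty_iff_eq_empty] at h
    have hZ : ∀ U : 𝒰, IsClosed (U : Set K) :=
      fun U => (h𝒜clopen _ (h𝒰sub U.2)).isClosed
    have hempty : (Set.univ : Set K) ∩ ⋂ U : 𝒰, (U : Set K) = ∅ := by
      rw [Set.univ_inter, ← Set.sInter_eq_iInter, h]
    obtain ⟨t, ht⟩ := CompactSpace.isCompact_univ.elim_finite_subfamily_closed
      (fun U : 𝒰 => (U : Set K)) hZ hempty
    have hsub : ↑(t.image (fun U : 𝒰 => (U : Set K))) ⊆ 𝒰 := by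
      intro x hx
      simp only [Finset.coe_image, Set.mem_image] at hx
      obtain ⟨U, _, rfl⟩ := hx
      exact U.2
    have hmem := hfin _ hsub
    have : ⋂₀ (↑(t.image (fun U : 𝒰 => (U : Set K))) : Set (Set K)) = ∅ := by
      rw [← ht, Set.univ_inter]
      ext x
      simp [Set.mem_sInter]
    rw [this] at hmem
    exact h𝒰bot hmem
  obtain ⟨x, hx⟩ := hne
  -- ⋂₀ 𝒰 is not a singleton (x is not a Gδ point)
  have hnot : ⋂₀ 𝒰 ≠ {x} := by
    intro heq
    obtain ⟨f, hf⟩ := (h𝒜count.mono h𝒰sub).exists_eq_range h𝒰ne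
    refine hGδ x ⟨f, fun n => (h𝒜clopen _ (h𝒰sub (hf ▸ Set.mem_range_self n))).isOpen, ?_⟩
    rw [← heq, hf, Set.sInter_range]
  -- find y ≠ x in ⋂₀ 𝒰
  have hy : ∃ y ∈ ⋂₀ 𝒰, y ≠ x := by
    by_contra h
    push_neg at h
    exact hnot (Set.eq_singleton_iff_unique_mem.mpr ⟨hx, h⟩)
  obtain ⟨y, hy, hyx⟩ := hy
  -- separate x from y by a clopen set
  obtain ⟨V, hVclopen, hxV, hVy⟩ :=
    hbasis.exists_subset_of_mem_open (show x ∈ ({y}ᶜ : Set K) from hyx.symm ∘ Set.mem_singleton_iff.mp)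
      (isOpen_compl_singleton)
  have hyV : y ∉ V := fun h => hVy h rfl
  refine ⟨V, hVclopen, ?_, ?_⟩
  · intro hV𝒜
    rcases h𝒰ultra V hV𝒜 with h | h
    · exact hyV (hy _ h)
    · exact (hx _ h) hxV
  · intro U hU
    exact ⟨⟨x, hx _ hU, hxV⟩, ⟨y, hy _ hU, hyV⟩⟩
end

section
/- Let $\mathcal{A}$ be a countable Boolean subalgebra of $\wp(\mathbb{N})/\mathrm{Fin}$. Then there is a Boolean subalgebra $\mathcal{A}'$ of $\wp(\mathbb{N})$ such that the quotient map $\rho: \wp(\mathbb{N}) \to \wp(\mathbb{N})/\mathrm{Fin}$ restricted to $\mathcal{A}'$ is a Boolean isomorphism onto $\mathcal{A}$. -/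
/-- The setoid on `Set ℕ` identifying sets that agree modulo a finite set. -/
def finSetoid : Setoid (Set ℕ) where
  r A B := ∀ᶠ n in Filter.cofinite, (n ∈ A ↔ n ∈ B)
  iseqv := by
    refine ⟨fun A => Filter.Eventually.of_forall fun n => Iff.rfl, fun h => ?_,
      fun h h' => ?_⟩
    · filter_upwards [h] with n hn using hn.symm
    · filter_upwards [h, h'] with n h1 h2 using h1.trans h2

/-- The quotient Boolean algebra `𝒫(ℕ)/Fin`. -/
def PFin : Type := Quotient finSetoid

/-- The quotient map `ρ : 𝒫(ℕ) → 𝒫(ℕ)/Fin`. -/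
def rhoFin (A : Set ℕ) : PFin := Quotient.mk finSetoid A

/-- Meet (intersection) in `𝒫(ℕ)/Fin`. -/
def pfinInf : PFin → PFin → PFin :=
  Quotient.map₂ (· ∩ ·) (by
    intro A A' hA B B' hB
    show ∀ᶠ n in Filter.cofinite, (n ∈ A ∩ B ↔ n ∈ A' ∩ B')
    filter_upwards [hA, hB] with n h1 h2
    simp only [Set.mem_inter_iff]
    exact and_congr h1 h2)

/-- Join (union) in `𝒫(ℕ)/Fin`. -/
def pfinSup : PFin → PFin → PFin :=
  Quotient.map₂ (· ∪ ·) (by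
    intro A A' hA B B' hB
    show ∀ᶠ n in Filter.cofinite, (n ∈ A ∪ B ↔ n ∈ A' ∪ B')
    filter_upwards [hA, hB] with n h1 h2
    simp only [Set.mem_union]
    exact or_congr h1 h2)

/-- Complement in `𝒫(ℕ)/Fin`. -/
def pfinCompl : PFin → PFin :=
  Quotient.map (·ᶜ) (by
    intro A A' hA
    show ∀ᶠ n in Filter.cofinite, (n ∈ Aᶜ ↔ n ∈ A'ᶜ)
    filter_upwards [hA] with n h1
    simp only [Set.mem_compl_iff]
    exact not_congr h1)

/-!
Enumerate `𝒜` as `ρ(E 0), ρ(E 1), …` and replace each `E n` by a set `L n` differing from it by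
finitely many points, chosen so that every nonempty atom of the partition generated by
`L 0, …, L (n - 1)` is infinite: on each atom, `E n` is rounded to the whole atom or to nothing
when it meets the atom, or misses it, in a finite set (there are only finitely many atoms, so
this changes finitely many points). A Boolean relation between the `L i` that holds modulo
finite sets then holds exactly, since every point lies in an infinite atom, which meets the
cofinite set where the relation holds; so the range of `L` is a subalgebra lifting `𝒜`.
-/

namespace CofiniteLift

open Filter Set

variable {α : Type*}

open Classical in
noncomputable def cofiniteRound (C E : Set α) : Set α :=
  if (C ∩ E).Finite then ∅ else if (C \ E).Finite then univ else E

theorem finite_setOf_mem_cofiniteRound_not_iff (C E : Set α) :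
    {y ∈ C | ¬(y ∈ cofiniteRound C E ↔ y ∈ E)}.Finite := by
  unfold cofiniteRound
  split_ifs with hCE hCdE
  · exact hCE.subset fun y ⟨hyC, hy⟩ => ⟨hyC, by simpa using hy⟩
  · exact hCdE.subset fun y ⟨hyC, hy⟩ => ⟨hyC, by simpa using hy⟩
  · simp

theorem infinite_setOf_mem_cofiniteRound_iff {C : Set α} (hC : C.Infinite) (E : Set α)
    (x : α) : {y ∈ C | y ∈ cofiniteRound C E ↔ x ∈ cofiniteRound C E}.Infinite := by
  unfold cofiniteRound
  split_ifs with hCE hCdE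
  · simpa using hC
  · simpa using hC
  · by_cases hx : x ∈ E
    · convert hCE using 2
      ext y
      simp [hx]
    · convert hCdE using 2
      ext y
      simp [hx]

def atom (L : ℕ → Set α) (n : ℕ) (x : α) : Set α := {y | ∀ i < n, (y ∈ L i ↔ x ∈ L i)}

theorem mem_atom_self (L : ℕ → Set α) (n : ℕ) (x : α) : x ∈ atom L n x :=
  fun _ _ => Iff.rfl

theorem atom_eq_of_mem {L : ℕ → Set α} {n : ℕ} {x y : α} (hy : y ∈ atom L n x) :
    atom L n y = atom L n x :=
  Set.ext fun z => forall₂_congr fun i hi => by rw [hy i hi]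

theorem atom_succ (L : ℕ → Set α) (n : ℕ) (x : α) :
    atom L (n + 1) x = {y ∈ atom L n x | y ∈ L n ↔ x ∈ L n} := by
  ext y
  simp only [atom, mem_ofPred_eq, Nat.lt_succ_iff_lt_or_eq, or_imp, forall_and,
    forall_eq]

theorem finite_range_atom (L : ℕ → Set α) (n : ℕ) : (range (atom L n)).Finite := by
  have : atom L n = (fun p : Fin n → Prop => {y | ∀ i : Fin n, (y ∈ L i ↔ p i)}) ∘
      fun x i => x ∈ L i := by
    ext x y
    simp [atom, Fin.forall_iff]
  rw [this]
  exact (finite_range _).subset (range_comp_subset_range _ _)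

theorem eq_setOf_of_eventually_iff {L : ℕ → Set α} (hL : ∀ n x, (atom L n x).Infinite)
    {g : Prop → Prop → Prop} {j m k : ℕ}
    (h : ∀ᶠ y in cofinite, (y ∈ L j ↔ g (y ∈ L m) (y ∈ L k))) :
    L j = {x | g (x ∈ L m) (x ∈ L k)} := by
  ext x
  obtain ⟨y, hy, hrel⟩ :=
    ((frequently_cofinite_iff_infinite.2 (hL (max (max j m) k + 1) x)).and_eventually h).exists
  rwa [hy j (by omega), hy m (by omega), hy k (by omega)] at hrel

-- The atom of `y` is written out, as the recursion must see that only `exactLift E i`, `i < n`, occur.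
noncomputable def exactLift (E : ℕ → Set α) (n : ℕ) : Set α :=
  {y | y ∈ cofiniteRound {z | ∀ i < n, (z ∈ exactLift E i ↔ y ∈ exactLift E i)} (E n)}
termination_by n

theorem exactLift_eq (E : ℕ → Set α) (n : ℕ) :
    exactLift E n = {y | y ∈ cofiniteRound (atom (exactLift E) n y) (E n)} := by
  rw [exactLift]
  rfl

theorem mem_exactLift_iff_of_mem_atom {E : ℕ → Set α} {n : ℕ} {x y : α}
    (hy : y ∈ atom (exactLift E) n x) :
    y ∈ exactLift E n ↔ y ∈ cofiniteRound (atom (exactLift E) n x) (E n) := by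
  rw [exactLift_eq, mem_ofPred_eq, atom_eq_of_mem hy]

theorem infinite_atom_exactLift [Infinite α] (E : ℕ → Set α) :
    ∀ n x, (atom (exactLift E) n x).Infinite
  | 0, x => by simpa [atom] using infinite_univ
  | n + 1, x => by
    have hsub : {y ∈ atom (exactLift E) n x |
        y ∈ cofiniteRound (atom (exactLift E) n x) (E n) ↔
          x ∈ cofiniteRound (atom (exactLift E) n x) (E n)} ⊆ atom (exactLift E) (n + 1) x := by
      rintro y ⟨hy, hyx⟩
      rw [atom_succ]
      exact ⟨hy, by rwa [mem_exactLift_iff_of_mem_atom hy,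
        mem_exactLift_iff_of_mem_atom (mem_atom_self _ n x)]⟩
    exact (infinite_setOf_mem_cofiniteRound_iff (infinite_atom_exactLift E n x) _ x).mono hsub

theorem eventually_mem_exactLift_iff (E : ℕ → Set α) (n : ℕ) :
    ∀ᶠ y in cofinite, (y ∈ exactLift E n ↔ y ∈ E n) := by
  refine eventually_cofinite.2 <| ((finite_range_atom (exactLift E) n).biUnion fun C _ =>
    finite_setOf_mem_cofiniteRound_not_iff C (E n)).subset fun y hy => ?_
  refine mem_biUnion (mem_range_self y) ⟨mem_atom_self _ n y, ?_⟩
  rwa [← mem_exactLift_iff_of_mem_atom (mem_atom_self _ n y)]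

end CofiniteLift

theorem rhoFin_eq_rhoFin_iff {A B : Set ℕ} :
    rhoFin A = rhoFin B ↔ ∀ᶠ n in Filter.cofinite, (n ∈ A ↔ n ∈ B) :=
  Quotient.eq

open CofiniteLift Set in
/-- Every countable Boolean subalgebra `𝒜` of `𝒫(ℕ)/Fin` has a
lift: a Boolean subalgebra `𝒜'` of `𝒫(ℕ)` mapped bijectively onto `𝒜` by the
quotient map `ρ` (so `ρ` restricted to `𝒜'` is a Boolean isomorphism onto `𝒜`,
since `ρ` preserves the Boolean operations). -/
theorem stmt_1 (𝒜 : Set PFin) (hcount : 𝒜.Countable)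
    (hbot : rhoFin ∅ ∈ 𝒜) (htop : rhoFin Set.univ ∈ 𝒜)
    (hinf : ∀ a ∈ 𝒜, ∀ b ∈ 𝒜, pfinInf a b ∈ 𝒜)
    (hsup : ∀ a ∈ 𝒜, ∀ b ∈ 𝒜, pfinSup a b ∈ 𝒜)
    (hcompl : ∀ a ∈ 𝒜, pfinCompl a ∈ 𝒜) :
    ∃ 𝒜' : Set (Set ℕ),
      (∅ : Set ℕ) ∈ 𝒜' ∧ (Set.univ : Set ℕ) ∈ 𝒜' ∧
      (∀ A ∈ 𝒜', ∀ B ∈ 𝒜', A ∩ B ∈ 𝒜') ∧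
      (∀ A ∈ 𝒜', ∀ B ∈ 𝒜', A ∪ B ∈ 𝒜') ∧
      (∀ A ∈ 𝒜', Aᶜ ∈ 𝒜') ∧
      Set.BijOn rhoFin 𝒜' 𝒜 := by
  obtain ⟨e, rfl⟩ := hcount.exists_eq_range ⟨_, hbot⟩
  set L := exactLift fun n => (e n).out
  have hρL (m : ℕ) : rhoFin (L m) = e m :=
    (rhoFin_eq_rhoFin_iff.2 (eventually_mem_exactLift_iff _ m)).trans (Quotient.out_eq _)
  have hexact {g : Prop → Prop → Prop} {j m k : ℕ}
      (h : rhoFin (L j) = rhoFin {y | g (y ∈ L m) (y ∈ L k)}) :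
      L j = {x | g (x ∈ L m) (x ∈ L k)} :=
    eq_setOf_of_eventually_iff (infinite_atom_exactLift _) (rhoFin_eq_rhoFin_iff.1 h)
  refine ⟨range L, ?_, ?_, ?_, ?_, ?_, ?_, ?_, ?_⟩
  · obtain ⟨m, hm⟩ := hbot
    exact ⟨m, hexact (g := fun _ _ => False) (m := m) (k := m) ((hρL m).trans hm)⟩
  · obtain ⟨m, hm⟩ := htop
    exact ⟨m, hexact (g := fun _ _ => True) (m := m) (k := m) ((hρL m).trans hm)⟩
  · rintro _ ⟨m, rfl⟩ _ ⟨k, rfl⟩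
    obtain ⟨j, hj⟩ := hinf _ ⟨m, rfl⟩ _ ⟨k, rfl⟩
    refine ⟨j, hexact (g := (· ∧ ·)) ?_⟩
    rw [hρL, hj, ← hρL m, ← hρL k]
    rfl
  · rintro _ ⟨m, rfl⟩ _ ⟨k, rfl⟩
    obtain ⟨j, hj⟩ := hsup _ ⟨m, rfl⟩ _ ⟨k, rfl⟩
    refine ⟨j, hexact (g := (· ∨ ·)) ?_⟩
    rw [hρL, hj, ← hρL m, ← hρL k]
    rfl
  · rintro _ ⟨m, rfl⟩
    obtain ⟨j, hj⟩ := hcompl _ ⟨m, rfl⟩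
    refine ⟨j, hexact (g := fun a _ => ¬a) (k := m) ?_⟩
    rw [hρL, hj, ← hρL m]
    rfl
  · rintro _ ⟨m, rfl⟩
    exact ⟨m, (hρL m).symm⟩
  · rintro _ ⟨m, rfl⟩ _ ⟨k, rfl⟩ hmk
    exact hexact (g := fun a _ => a) (k := k) (hmk.trans rfl)
  · rintro _ ⟨m, rfl⟩
    exact ⟨L m, mem_range_self m, hρL m⟩
end

section
/- The Boolean algebra $\wp(\mathbb{N})/\mathrm{Fin}$ satisfies condition $H_\omega'$: given elements $A_n, B_n$ with $A_n < A_{n+1} < \dots < B_{n+1} < B_n$ for all $n \in \mathbb{N}$ (i.e., the $A_n$ strictly increase, the $B_n$ strictly decrease, and every $A_n$ is strictly below every $B_m$), there exists $C$ with $A_n < C < B_n$ for all $n \in \mathbb{N}$. -/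
/-- The order on `𝒫(ℕ)/Fin` induced by almost inclusion `⊆*`. -/
def pfinLe : PFin → PFin → Prop :=
  Quotient.lift₂ (fun A B => ∀ᶠ n in Filter.cofinite, n ∈ A → n ∈ B)
    (by
      intro A B A' B' hA hB
      apply propext
      constructor
      · intro h; filter_upwards [h, hA, hB] with n h1 h2 h3 h4
        exact h3.mp (h1 (h2.mpr h4))
      · intro h; filter_upwards [h, hA, hB] with n h1 h2 h3 h4
        exact h3.mpr (h1 (h2.mp h4)))

/-- Strict order on `𝒫(ℕ)/Fin`. -/
def pfinLt (a b : PFin) : Prop := pfinLe a b ∧ a ≠ b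

/-- Almost inclusion at the level of sets. -/
def SLe (s t : Set ℕ) : Prop := ∀ᶠ n in Filter.cofinite, n ∈ s → n ∈ t

lemma pfinLe_mk (s t : Set ℕ) :
    pfinLe (Quotient.mk finSetoid s) (Quotient.mk finSetoid t) ↔ SLe s t := Iff.rfl

lemma sle_iff_finite (s t : Set ℕ) : SLe s t ↔ (s \ t).Finite := by
  have hset : {x | ¬(x ∈ s → x ∈ t)} = s \ t := by
    ext x; simp [Classical.not_imp, Set.mem_diff]
  rw [SLe, Filter.eventually_cofinite, hset]

lemma pfin_antisymm {x y : PFin} (h1 : pfinLe x y) (h2 : pfinLe y x) : x = y := by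
  induction x using Quotient.inductionOn with | h s =>
  induction y using Quotient.inductionOn with | h t =>
  refine Quotient.sound ?_
  have h1' : SLe s t := h1
  have h2' : SLe t s := h2
  filter_upwards [h1', h2'] with n a b
  exact ⟨a, b⟩

/-- `𝒫(ℕ)/Fin` satisfies condition `H_ω'`: any strictly increasing
sequence `(Aₙ)` interlaced below a strictly decreasing sequence `(Bₙ)` can be
separated by an element `C`. -/
theorem stmt_2 (A B : ℕ → PFin)
    (hA : ∀ n, pfinLt (A n) (A (n + 1)))
    (hB : ∀ n, pfinLt (B (n + 1)) (B n))
    (hAB : ∀ n m, pfinLt (A n) (B m)) :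
    ∃ C : PFin, ∀ n, pfinLt (A n) C ∧ pfinLt C (B n) := by
  classical
  set a : ℕ → Set ℕ := fun n => (A n).out with ha
  set b : ℕ → Set ℕ := fun n => (B n).out with hb
  have hAa : ∀ n, A n = Quotient.mk finSetoid (a n) := fun n => ((A n).out_eq).symm
  have hBb : ∀ n, B n = Quotient.mk finSetoid (b n) := fun n => ((B n).out_eq).symm
  have hab : ∀ n m, SLe (a n) (b m) := by
    intro n m
    have := (hAB n m).1
    rw [hAa n, hBb m] at this
    exact this
  -- the increasing unions and decreasing intersections
  set a' : ℕ → Set ℕ := fun n => ⋃ k ∈ Finset.range (n + 1), a k with ha'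
  set b' : ℕ → Set ℕ := fun n => ⋂ k ∈ Finset.range (n + 1), b k with hb'
  have ha'mono : ∀ {k n : ℕ}, k ≤ n → a' k ⊆ a' n := by
    intro k n hkn x hx
    simp only [ha', Set.mem_iUnion, Finset.mem_range] at *
    obtain ⟨j, hj, h⟩ := hx
    exact ⟨j, by omega, h⟩
  have hb'anti : ∀ {k n : ℕ}, k ≤ n → b' n ⊆ b' k := by
    intro k n hkn x hx
    simp only [hb', Set.mem_iInter, Finset.mem_range] at *
    exact fun j hj => hx j (by omega)
  have haa' : ∀ n, a n ⊆ a' n := by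
    intro n x hx
    exact Set.mem_biUnion (Finset.self_mem_range_succ n) hx
  have hb'b : ∀ n, b' n ⊆ b n := by
    intro n x hx
    exact Set.biInter_subset_of_mem (Finset.self_mem_range_succ n) hx
  -- a' n \ b' n is finite
  have hfin : ∀ n, (a' n \ b' n).Finite := by
    intro n
    have : a' n \ b' n ⊆ ⋃ k ∈ Finset.range (n + 1), ⋃ j ∈ Finset.range (n + 1), (a k \ b j) := by
      intro x hx
      obtain ⟨hx1, hx2⟩ := hx
      simp only [ha', Set.mem_iUnion] at hx1
      obtain ⟨k, hk, hxk⟩ := hx1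
      simp only [hb', Set.mem_iInter, not_forall] at hx2
      obtain ⟨j, hj, hxj⟩ := hx2
      simp only [Set.mem_iUnion]
      exact ⟨k, hk, j, hj, hxk, hxj⟩
    refine Set.Finite.subset ?_ this
    refine (Finset.range (n + 1)).finite_toSet.biUnion fun k _ => ?_
    refine (Finset.range (n + 1)).finite_toSet.biUnion fun j _ => ?_
    exact (sle_iff_finite _ _).mp (hab k j)
  -- choose bounds
  have hK : ∀ n, ∃ K : ℕ, ∀ x ∈ a' n \ b' n, x < K := by
    intro n
    obtain ⟨K, hK⟩ := (hfin n).bddAbove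
    exact ⟨K + 1, fun x hx => Nat.lt_succ_of_le (hK hx)⟩
  choose K hKspec using hK
  -- the separating set
  set C : Set ℕ := ⋃ n, (a' n ∩ {x | K n ≤ x}) with hC
  have hLeAC : ∀ n, SLe (a n) C := by
    intro n
    rw [sle_iff_finite]
    refine Set.Finite.subset (Set.finite_Iio (K n)) ?_
    intro x ⟨hx1, hx2⟩
    by_contra h
    simp only [Set.mem_Iio, not_lt] at h
    exact hx2 (Set.mem_iUnion.mpr ⟨n, haa' n hx1, h⟩)
  have hLeCb : ∀ m, SLe C (b m) := by
    intro m
    rw [sle_iff_finite]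
    refine Set.Finite.subset (hfin m) ?_
    intro x ⟨hx1, hx2⟩
    obtain ⟨n, hxn⟩ := Set.mem_iUnion.mp hx1
    obtain ⟨hxa, hxK⟩ := hxn
    have hxb'm : x ∉ b' m := fun h => hx2 (hb'b m h)
    rcases le_or_gt n m with hnm | hmn
    · exact ⟨ha'mono hnm hxa, hxb'm⟩
    · exfalso
      have hxb'n : x ∉ b' n := fun h => hxb'm (hb'anti hmn.le h)
      exact absurd hxK (not_le.mpr (hKspec n x ⟨hxa, hxb'n⟩))
  refine ⟨Quotient.mk finSetoid C, fun n => ?_⟩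
  have hAC : ∀ k, pfinLe (A k) (Quotient.mk finSetoid C) := by
    intro k; rw [hAa k]; exact hLeAC k
  have hCB : ∀ k, pfinLe (Quotient.mk finSetoid C) (B k) := by
    intro k; rw [hBb k]; exact hLeCb k
  refine ⟨⟨hAC n, ?_⟩, ⟨hCB n, ?_⟩⟩
  · intro h
    have h1 : pfinLe (A (n + 1)) (A n) := h ▸ hAC (n + 1)
    exact (hA n).2 (pfin_antisymm (hA n).1 h1)
  · intro h
    have h1 : pfinLe (B n) (B (n + 1)) := h ▸ hCB (n + 1)
    exact (hB n).2 (pfin_antisymm (hB n).1 h1)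
end

section
/- For $\alpha \in (71/72, 1]$, let $F_\alpha$ be the orthogonal projection of $\mathbb{C}^2$ onto $\mathbb{C}(\alpha e_0 + \sqrt{1-\alpha^2}\, e_1)$, let $F_\alpha^\perp = I - F_\alpha$, and let $E$ be the projection onto $\mathbb{C} e_0$. Suppose $Q$ is a one-dimensional orthogonal projection on $\mathbb{C}^2$ and $Q^\perp = I - Q$. Then at least one of the following holds: (1) all four norms $\|F_\alpha - Q\|, \|F_\alpha - Q^\perp\|, \|F_\alpha^\perp - Q\|, \|F_\alpha^\perp - Q^\perp\|$ are $\ge 1/6$; (2) $\|E - Q\| < 1/2$ and $\|E - Q^\perp\| > 1/2$; (3) $\|E - Q^\perp\| < 1/2$ and $\|E - Q\| > 1/2$. -/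
noncomputable section

/-- The two-dimensional complex Hilbert space `ℂ²`. -/
abbrev C2 : Type := EuclideanSpace ℂ (Fin 2)

/-- The first standard basis vector `e₀`. -/
def e0 : C2 := EuclideanSpace.single 0 1

/-- The second standard basis vector `e₁`. -/
def e1 : C2 := EuclideanSpace.single 1 1

/-- The rank-one operator `x ↦ ⟪v, x⟫ v`; for a unit vector `v` this is the
orthogonal projection onto `ℂ v`. -/
def projOnto (v : C2) : C2 →L[ℂ] C2 := (innerSL ℂ v).smulRight v

/-- The unit vector `f_{α,0} = α e₀ + √(1-α²) e₁`. -/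
def fvec (α : ℝ) : C2 := (α : ℂ) • e0 + ((Real.sqrt (1 - α ^ 2) : ℝ) : ℂ) • e1

/-! In `ℂ²` the difference of two rank-one projections `P_u - P_v` is self-adjoint and
traceless, so its square is the scalar `1 - |⟪u, v⟫|²`; hence `‖P_u - P_v‖ = |u₀v₁ - u₁v₀|`,
and `P_u - (1 - P_v)`, whose square is `1 - (P_u - P_v)²`, has norm `|⟪u, v⟫|`.
Writing `Q = P_v` and `β = √(1 - α²)`, this gives `‖E - Q‖ = |v₁|` and `‖E - Q^⊥‖ = |v₀|`,
while the four distances from `F_α` and `F_α^⊥` are `|αv₀ + βv₁|` and `|αv₁ - βv₀|`.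
Since `|v₀|² + |v₁|² = 1`, if one of `|v₀|, |v₁|` is below `1/2` the other exceeds `1/2`,
which is alternative (3) or (2). Otherwise both are at least `1/2`, and the reverse triangle
inequality bounds both distances below by `α/2 - β > 1/6`, because `α > 71/72` forces
`β < 1/6`. -/

open InnerProductSpace ComplexConjugate

theorem IsStarProjection.exists_eq_rankOne {𝕜 E : Type*} [RCLike 𝕜] [NormedAddCommGroup E]
    [InnerProductSpace 𝕜 E] [CompleteSpace E] {p : E →L[𝕜] E} (hp : IsStarProjection p)
    (hrank : Module.finrank 𝕜 (LinearMap.range (p : E →ₗ[𝕜] E)) = 1) :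
    ∃ u : E, ‖u‖ = 1 ∧ p = rankOne 𝕜 u u := by
  have : FiniteDimensional 𝕜 (LinearMap.range (p : E →ₗ[𝕜] E)) :=
    Module.finite_of_finrank_pos (hrank ▸ one_pos)
  obtain ⟨⟨x, hxp⟩, hne⟩ := Module.finrank_pos_iff_exists_ne_zero.mp (hrank ▸ one_pos)
  have hx0 : x ≠ 0 := by simpa using hne
  set u : E := (‖x‖⁻¹ : 𝕜) • x
  have hu : ‖u‖ = 1 := norm_smul_inv_norm hx0
  have hu0 : u ≠ 0 := norm_ne_zero_iff.mp (by simp [hu])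
  have hrange_p : 𝕜 ∙ u = LinearMap.range (p : E →ₗ[𝕜] E) :=
    Submodule.eq_of_le_of_finrank_eq
      ((Submodule.span_singleton_le_iff_mem _ _).mpr (Submodule.smul_mem _ _ hxp))
      (by rw [finrank_span_singleton hu0, hrank])
  have hrange_u : LinearMap.range (rankOne 𝕜 u u : E →ₗ[𝕜] E) = 𝕜 ∙ u := by
    rw [toLinearMap_rankOne, LinearMap.range_smulRight_apply]
    exact fun h => hu0 (by simpa using LinearMap.congr_fun h u)
  refine ⟨u, hu, ?_⟩
  rw [ContinuousLinearMap.IsStarProjection.ext_iff hp (isStarProjection_rankOne_self hu),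
    hrange_u, hrange_p]

theorem IsSelfAdjoint.norm_sq_eq_of_mul_self_eq_smul_one {𝕜 A : Type*} [RCLike 𝕜] [NormedRing A]
    [StarRing A] [CStarRing A] [NormedAlgebra 𝕜 A] [NormOneClass A] {a : A}
    (ha : IsSelfAdjoint a) {r : ℝ} (hr : 0 ≤ r) (h : a * a = (r : 𝕜) • 1) : ‖a‖ ^ 2 = r := by
  rw [← ha.norm_mul_self, h, norm_smul, norm_one, mul_one, RCLike.norm_ofReal, abs_of_nonneg hr]

theorem IsIdempotentElem.sub_one_sub_mul_self {R : Type*} [Ring R] {p q : R}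
    (hp : IsIdempotentElem p) (hq : IsIdempotentElem q) :
    (p - (1 - q)) * (p - (1 - q)) = 1 - (p - q) * (p - q) := by
  calc (p - (1 - q)) * (p - (1 - q))
      = 1 - (p - q) * (p - q) + 2 * (p * p - p) + 2 * (q * q - q) := by noncomm_ring
    _ = 1 - (p - q) * (p - q) := by simp [hp.eq, hq.eq]

theorem norm_one_sub_sub {R : Type*} [NormedRing R] (p q : R) :
    ‖(1 - p) - q‖ = ‖p - (1 - q)‖ := by
  rw [← norm_neg]; congr 1; abel

theorem norm_one_sub_sub_one_sub {R : Type*} [NormedRing R] (p q : R) :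
    ‖(1 - p) - (1 - q)‖ = ‖p - q‖ := by
  rw [sub_sub_sub_cancel_left, norm_sub_rev]

theorem Complex.lagrange_identity (a b z w : ℂ) :
    ‖conj a * z + conj b * w‖ ^ 2 + ‖a * w - b * z‖ ^ 2
      = (‖a‖ ^ 2 + ‖b‖ ^ 2) * (‖z‖ ^ 2 + ‖w‖ ^ 2) := by
  simp only [Complex.sq_norm, Complex.normSq_apply, Complex.add_re, Complex.add_im,
    Complex.sub_re, Complex.sub_im, Complex.mul_re, Complex.mul_im, Complex.conj_re,
    Complex.conj_im]
  ring

theorem one_div_six_le_norm_mul_add_mul {α β : ℝ} {z w : ℂ} (hα : 2 / 3 ≤ α) (hβ : |β| ≤ 1 / 6)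
    (hz : 1 / 2 ≤ ‖z‖) (hw : ‖w‖ ≤ 1) : 1 / 6 ≤ ‖(α : ℂ) * z + β * w‖ := by
  have h := norm_sub_norm_le ((α : ℂ) * z) (-(β * w))
  rw [sub_neg_eq_add, norm_neg, norm_mul, norm_mul, Complex.norm_real, Complex.norm_real,
    Real.norm_eq_abs, Real.norm_eq_abs, abs_of_nonneg (by linarith)] at h
  nlinarith [abs_nonneg β, norm_nonneg w]

-- `(71/72)² > 35/36`: this is where the threshold on `α` comes from.
theorem sqrt_one_sub_sq_le_one_div_six {α : ℝ} (hα : 71 / 72 < α) : √(1 - α ^ 2) ≤ 1 / 6 := by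
  rw [Real.sqrt_le_left (by norm_num)]
  nlinarith

theorem projOnto_eq_rankOne (v : C2) : projOnto v = rankOne ℂ v v := rfl

theorem isStarProjection_projOnto {v : C2} (hv : ‖v‖ = 1) : IsStarProjection (projOnto v) :=
  isStarProjection_rankOne_self hv

theorem projOnto_apply (v x : C2) : projOnto v x = (inner ℂ v x : ℂ) • v := rfl

theorem C2.inner_eq (u v : C2) : (inner ℂ u v : ℂ) = conj (u 0) * v 0 + conj (u 1) * v 1 := by
  simp [PiLp.inner_apply, Fin.sum_univ_two, mul_comm]

theorem C2.norm_sq_eq (v : C2) : ‖v‖ ^ 2 = ‖v 0‖ ^ 2 + ‖v 1‖ ^ 2 := by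
  simp [EuclideanSpace.norm_sq_eq, Fin.sum_univ_two]

theorem projOnto_sub_projOnto_mul_self {u v : C2} (hu : ‖u‖ = 1) (hv : ‖v‖ = 1) :
    (projOnto u - projOnto v) * (projOnto u - projOnto v)
      = ((1 - ‖(inner ℂ u v : ℂ)‖ ^ 2 : ℝ) : ℂ) • 1 := by
  have hu' : conj (u 0) * u 0 + conj (u 1) * u 1 = 1 := by
    rw [← C2.inner_eq, inner_self_eq_norm_sq_to_K, hu]; norm_num
  have hv' : conj (v 0) * v 0 + conj (v 1) * v 1 = 1 := by
    rw [← C2.inner_eq, inner_self_eq_norm_sq_to_K, hv]; norm_num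
  have hc : (((1 - ‖(inner ℂ u v : ℂ)‖ ^ 2 : ℝ)) : ℂ)
      = 1 - (conj (u 0) * v 0 + conj (u 1) * v 1) * (conj (v 0) * u 0 + conj (v 1) * u 1) := by
    rw [Complex.ofReal_sub, Complex.ofReal_one, Complex.ofReal_pow, ← Complex.mul_conj',
      C2.inner_eq]
    simp only [map_add, map_mul, Complex.conj_conj]
    ring
  rw [hc]
  ext x i
  fin_cases i <;>
    simp only [Fin.zero_eta, Fin.mk_one, mul_apply_eq_comp,
      sub_apply, projOnto_apply, C2.inner_eq, smul_apply,
      one_apply_eq_self, PiLp.smul_apply, PiLp.sub_apply, smul_eq_mul]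
  · linear_combination ((conj (u 0) * x 0 + conj (u 1) * x 1) * u 0 + conj (v 1) * v 1 * x 0
        - conj (v 1) * v 0 * x 1) * hu'
      + ((conj (v 0) * x 0 + conj (v 1) * x 1) * v 0 + (1 - conj (u 0) * u 0) * x 0
        - conj (u 1) * u 0 * x 1) * hv'
  · linear_combination ((conj (u 0) * x 0 + conj (u 1) * x 1) * u 1 + conj (v 0) * v 0 * x 1
        - conj (v 0) * v 1 * x 0) * hu'
      + ((conj (v 0) * x 0 + conj (v 1) * x 1) * v 1 + (1 - conj (u 1) * u 1) * x 1
        - conj (u 0) * u 1 * x 0) * hv'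

theorem norm_projOnto_sub_projOnto_sq {u v : C2} (hu : ‖u‖ = 1) (hv : ‖v‖ = 1) :
    ‖projOnto u - projOnto v‖ ^ 2 = 1 - ‖(inner ℂ u v : ℂ)‖ ^ 2 := by
  have hc : ‖(inner ℂ u v : ℂ)‖ ≤ 1 := by
    simpa [hu, hv] using norm_inner_le_norm (𝕜 := ℂ) u v
  have hsa : IsSelfAdjoint (projOnto u - projOnto v) :=
    IsSelfAdjoint.sub (R := C2 →L[ℂ] C2) (isStarProjection_projOnto hu).isSelfAdjoint
      (isStarProjection_projOnto hv).isSelfAdjoint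
  exact hsa.norm_sq_eq_of_mul_self_eq_smul_one (by nlinarith [norm_nonneg (inner ℂ u v)])
    (projOnto_sub_projOnto_mul_self hu hv)

theorem norm_projOnto_sub_one_sub_projOnto {u v : C2} (hu : ‖u‖ = 1) (hv : ‖v‖ = 1) :
    ‖projOnto u - (1 - projOnto v)‖ = ‖(inner ℂ u v : ℂ)‖ := by
  have hPu := isStarProjection_projOnto hu
  have hPv := isStarProjection_projOnto hv
  have hsa : IsSelfAdjoint (projOnto u - (1 - projOnto v)) :=
    IsSelfAdjoint.sub (R := C2 →L[ℂ] C2) hPu.isSelfAdjoint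
      ((IsSelfAdjoint.one _).sub hPv.isSelfAdjoint)
  have hsq : (projOnto u - (1 - projOnto v)) * (projOnto u - (1 - projOnto v))
      = ((‖(inner ℂ u v : ℂ)‖ ^ 2 : ℝ) : ℂ) • 1 := by
    rw [hPu.isIdempotentElem.sub_one_sub_mul_self hPv.isIdempotentElem,
      projOnto_sub_projOnto_mul_self hu hv]
    push_cast
    module
  rw [← pow_left_inj₀ (norm_nonneg _) (norm_nonneg _) two_ne_zero]
  exact hsa.norm_sq_eq_of_mul_self_eq_smul_one (sq_nonneg _) hsq

theorem norm_projOnto_sub_projOnto {u v : C2} (hu : ‖u‖ = 1) (hv : ‖v‖ = 1) :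
    ‖projOnto u - projOnto v‖ = ‖u 0 * v 1 - u 1 * v 0‖ := by
  have h := Complex.lagrange_identity (u 0) (u 1) (v 0) (v 1)
  rw [← C2.inner_eq, ← C2.norm_sq_eq, ← C2.norm_sq_eq, hu, hv] at h
  rw [← pow_left_inj₀ (norm_nonneg _) (norm_nonneg _) two_ne_zero,
    norm_projOnto_sub_projOnto_sq hu hv]
  linarith

theorem e0_apply_zero : e0 0 = 1 := by simp [e0]

theorem e0_apply_one : e0 1 = 0 := by simp [e0]

theorem norm_e0 : ‖e0‖ = 1 := by simp [e0]

theorem fvec_apply_zero (α : ℝ) : fvec α 0 = α := by simp [fvec, e0, e1]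

theorem fvec_apply_one (α : ℝ) : fvec α 1 = √(1 - α ^ 2) := by simp [fvec, e0, e1]

theorem norm_fvec {α : ℝ} (hα : α ^ 2 ≤ 1) : ‖fvec α‖ = 1 := by
  rw [← pow_left_inj₀ (norm_nonneg _) zero_le_one two_ne_zero, C2.norm_sq_eq, fvec_apply_zero,
    fvec_apply_one, Complex.norm_real, Complex.norm_real, Real.norm_eq_abs, Real.norm_eq_abs, sq_abs,
    sq_abs, Real.sq_sqrt (by linarith)]
  ring

theorem norm_projOnto_e0_sub_projOnto {v : C2} (hv : ‖v‖ = 1) :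
    ‖projOnto e0 - projOnto v‖ = ‖v 1‖ := by
  simp [norm_projOnto_sub_projOnto norm_e0 hv, e0_apply_zero, e0_apply_one]

theorem norm_projOnto_e0_sub_one_sub_projOnto {v : C2} (hv : ‖v‖ = 1) :
    ‖projOnto e0 - (1 - projOnto v)‖ = ‖v 0‖ := by
  simp [norm_projOnto_sub_one_sub_projOnto norm_e0 hv, C2.inner_eq, e0_apply_zero, e0_apply_one]

theorem norm_projOnto_fvec_sub_projOnto {α : ℝ} (hα : α ^ 2 ≤ 1) {v : C2} (hv : ‖v‖ = 1) :
    ‖projOnto (fvec α) - projOnto v‖ = ‖(α : ℂ) * v 1 - √(1 - α ^ 2) * v 0‖ := by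
  rw [norm_projOnto_sub_projOnto (norm_fvec hα) hv, fvec_apply_zero, fvec_apply_one]

theorem norm_projOnto_fvec_sub_one_sub_projOnto {α : ℝ} (hα : α ^ 2 ≤ 1) {v : C2}
    (hv : ‖v‖ = 1) :
    ‖projOnto (fvec α) - (1 - projOnto v)‖ = ‖(α : ℂ) * v 0 + √(1 - α ^ 2) * v 1‖ := by
  simp [norm_projOnto_sub_one_sub_projOnto (norm_fvec hα) hv, C2.inner_eq, fvec_apply_zero,
    fvec_apply_one]

/-- For `α ∈ (71/72, 1]` and any one-dimensional orthogonal
projection `Q` on `ℂ²` with complement `Q^⊥ = 1 - Q`, writing `F = F_α`,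
`F^⊥ = 1 - F` and `E` for the projection onto `ℂ e₀`, one of the three
alternatives holds. -/
theorem stmt_6 (α : ℝ) (h1 : 71 / 72 < α) (h2 : α ≤ 1)
    (Q : C2 →L[ℂ] C2) (hidem : Q ∘L Q = Q) (hsa : IsSelfAdjoint Q)
    (hrank : Module.finrank ℂ (LinearMap.range (Q : C2 →ₗ[ℂ] C2)) = 1) :
    (‖projOnto (fvec α) - Q‖ ≥ 1 / 6 ∧ ‖projOnto (fvec α) - (1 - Q)‖ ≥ 1 / 6 ∧
      ‖(1 - projOnto (fvec α)) - Q‖ ≥ 1 / 6 ∧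
      ‖(1 - projOnto (fvec α)) - (1 - Q)‖ ≥ 1 / 6) ∨
    (‖projOnto e0 - Q‖ < 1 / 2 ∧ ‖projOnto e0 - (1 - Q)‖ > 1 / 2) ∨
    (‖projOnto e0 - (1 - Q)‖ < 1 / 2 ∧ ‖projOnto e0 - Q‖ > 1 / 2) := by
  obtain ⟨v, hv, rfl⟩ := IsStarProjection.exists_eq_rankOne ⟨hidem, hsa⟩ hrank
  have hα : α ^ 2 ≤ 1 := by nlinarith
  rw [← projOnto_eq_rankOne, norm_one_sub_sub_one_sub, norm_one_sub_sub,
    norm_projOnto_e0_sub_projOnto hv, norm_projOnto_e0_sub_one_sub_projOnto hv,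
    norm_projOnto_fvec_sub_projOnto hα hv, norm_projOnto_fvec_sub_one_sub_projOnto hα hv]
  have hv_sq : ‖v 0‖ ^ 2 + ‖v 1‖ ^ 2 = 1 := by rw [← C2.norm_sq_eq, hv, one_pow]
  rcases lt_or_ge ‖v 0‖ (1 / 2) with hv0 | hv0
  · exact Or.inr (Or.inr ⟨hv0, by nlinarith [norm_nonneg (v 0), norm_nonneg (v 1)]⟩)
  rcases lt_or_ge ‖v 1‖ (1 / 2) with hv1 | hv1
  · exact Or.inr (Or.inl ⟨hv1, by nlinarith [norm_nonneg (v 0), norm_nonneg (v 1)]⟩)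
  have hβ : |√(1 - α ^ 2)| ≤ 1 / 6 := by
    rw [abs_of_nonneg (Real.sqrt_nonneg _)]
    exact sqrt_one_sub_sq_le_one_div_six h1
  have hα' : 2 / 3 ≤ α := by linarith
  have hv0_le : ‖-v 0‖ ≤ 1 := by rw [norm_neg]; nlinarith
  have hv1_le : ‖v 1‖ ≤ 1 := by nlinarith
  have hF := one_div_six_le_norm_mul_add_mul hα' hβ hv0 hv1_le
  have hF' := one_div_six_le_norm_mul_add_mul hα' hβ hv1 hv0_le
  rw [mul_neg, ← sub_eq_add_neg] at hF'
  exact Or.inl ⟨hF', hF, hF, hF'⟩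

end
end

section
/- Let $T$ be a self-adjoint operator on a finite-dimensional complex Hilbert space with eigenvalues $a_1 \le \dots \le a_n$ (listed with multiplicity), and suppose $a_n - a_1 \ge \delta > 0$. Then there exists an orthogonal projection $P$ such that $\|[T, P]\| \ge \delta/2$, where $[T,P] = TP - PT$. -/
/-!
Take unit eigenvectors `f`, `g` for `a`, `b`; they are orthogonal since `a ≠ b`. For the
orthogonal projection `P` onto `f + g`, the commutator `[T, P]` sends `f + g` to
`((a - b) / 2) • (f - g)`, and `‖f - g‖ = ‖f + g‖`, so `‖[T, P]‖ ≥ |b - a| / 2`.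
-/

open Module End
open scoped InnerProductSpace

section

variable {𝕜 E : Type*} [RCLike 𝕜] [NormedAddCommGroup E] [InnerProductSpace 𝕜 E]

theorem ContinuousLinearMap.exists_norm_eq_one_mem_eigenspace_of_mem_spectrum
    [FiniteDimensional 𝕜 E] {T : E →L[𝕜] E} {μ : 𝕜} (h : μ ∈ spectrum 𝕜 T) :
    ∃ v, ‖v‖ = 1 ∧ v ∈ eigenspace (T : End 𝕜 E) μ := by
  have := FiniteDimensional.complete 𝕜 E
  rw [ContinuousLinearMap.spectrum_eq, ← hasEigenvalue_iff_mem_spectrum] at h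
  obtain ⟨v, hv, hv0⟩ := h.exists_hasEigenvector
  exact ⟨(‖v‖⁻¹ : 𝕜) • v, norm_smul_inv_norm hv0, Submodule.smul_mem _ _ hv⟩

theorem ContinuousLinearMap.norm_sub_div_two_le_norm_commutator_starProjection
    {T : E →L[𝕜] E} {f g : E} {a b : 𝕜} (hf : ‖f‖ = 1) (hg : ‖g‖ = 1) (hfg : ⟪f, g⟫_𝕜 = 0)
    (hTf : T f = a • f) (hTg : T g = b • g) :
    ‖b - a‖ / 2 ≤
      ‖T ∘L (𝕜 ∙ (f + g)).starProjection - (𝕜 ∙ (f + g)).starProjection ∘L T‖ := by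
  set P := (𝕜 ∙ (f + g)).starProjection
  have hgf : ⟪g, f⟫_𝕜 = 0 := inner_eq_zero_symm.mp hfg
  have hnorm_sq : ‖f + g‖ ^ 2 = 2 := by
    rw [sq, norm_add_sq_eq_norm_sq_add_norm_sq_of_inner_eq_zero f g hfg, hf, hg]; norm_num
  have hnorm_pos : 0 < ‖f + g‖ := by nlinarith [norm_nonneg (f + g)]
  have hPfg : P (f + g) = f + g :=
    Submodule.starProjection_eq_self_iff.mpr (Submodule.mem_span_singleton_self _)
  have hPTfg : P (T (f + g)) = ((a + b) / 2) • (f + g) := by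
    rw [Submodule.starProjection_singleton, hnorm_sq, map_add, hTf, hTg]
    simp only [inner_add_left, inner_add_right, inner_smul_right, hfg, hgf,
      inner_self_eq_norm_sq_to_K, hf, hg, RCLike.ofReal_ofNat]
    norm_num
  have hcomm : (T ∘L P - P ∘L T) (f + g) = ((a - b) / 2) • (f - g) := by
    rw [sub_apply, comp_apply, comp_apply, hPfg, hPTfg, map_add, hTf, hTg]
    module
  refine le_of_mul_le_mul_right ?_ hnorm_pos
  calc ‖b - a‖ / 2 * ‖f + g‖ = ‖(T ∘L P - P ∘L T) (f + g)‖ := by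
        rw [hcomm, norm_smul, norm_sub_eq_norm_add hgf, norm_div, norm_sub_rev]
        simp
    _ ≤ _ := (T ∘L P - P ∘L T).le_opNorm _

end

/-- If a self-adjoint operator `T` on a finite-dimensional complex
Hilbert space has two eigenvalues `a ≤ b` with `b - a ≥ δ > 0` (i.e. the spread
of its eigenvalue list `a₁ ≤ … ≤ aₙ` is at least `δ`), then there is an
orthogonal projection `P` with `‖[T, P]‖ ≥ δ/2`. -/
theorem stmt_15 {H : Type*} [NormedAddCommGroup H] [InnerProductSpace ℂ H]
    [FiniteDimensional ℂ H] (T : H →L[ℂ] H) (hT : IsSelfAdjoint T)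
    (δ a b : ℝ) (hδ : 0 < δ)
    (ha : (a : ℂ) ∈ spectrum ℂ T) (hb : (b : ℂ) ∈ spectrum ℂ T)
    (hab : b - a ≥ δ) :
    ∃ P : H →L[ℂ] H, P ∘L P = P ∧ IsSelfAdjoint P ∧
      δ / 2 ≤ ‖T ∘L P - P ∘L T‖ := by
  obtain ⟨f, hf, hTf⟩ := T.exists_norm_eq_one_mem_eigenspace_of_mem_spectrum ha
  obtain ⟨g, hg, hTg⟩ := T.exists_norm_eq_one_mem_eigenspace_of_mem_spectrum hb
  have hne : (a : ℂ) ≠ b := by exact_mod_cast (by linarith : a ≠ b)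
  have hfg : ⟪f, g⟫_ℂ = 0 :=
    hT.isSymmetric.orthogonalFamily_eigenspaces hne ⟨f, hTf⟩ ⟨g, hTg⟩
  refine ⟨(ℂ ∙ (f + g)).starProjection, Submodule.isIdempotentElem_starProjection _,
    isSelfAdjoint_starProjection _, ?_⟩
  calc δ / 2 ≤ ‖(b : ℂ) - a‖ / 2 := by
        rw [← Complex.ofReal_sub, Complex.norm_real, Real.norm_of_nonneg (by linarith)]
        linarith
    _ ≤ _ := T.norm_sub_div_two_le_norm_commutator_starProjection hf hg hfg
        (mem_eigenspace_iff.mp hTf) (mem_eigenspace_iff.mp hTg)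
end

section
/- For each $x \in \{0,1\}^{\mathbb{N}}$ let $Y_k$ denote the set of natural numbers divisible by the $k$-th prime, and let $h_0([x|n]) = \bigcap_{k < n, x(k)=1} Y_k \cap \bigcap_{k < n, x(k)=0} (\mathbb{N} \setminus Y_k)$. Then for every infinite $Y \subseteq \mathbb{N}$ there exists $x \in \{0,1\}^{\mathbb{N}}$ and an infinite $Z \subseteq Y$ such that $Z \subseteq^* h_0([x|n])$ for every $n \in \mathbb{N}$ (i.e., $Z \setminus h_0([x|n])$ is finite for all $n$). -/
/-- The set of natural numbers divisible by the `k`-th prime. -/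
def primeMultiples (k : ℕ) : Set ℕ := {m : ℕ | Nat.nth Nat.Prime k ∣ m}

/-- `h₀([x|n])`: the intersection of the first `n` sets `Yₖ` or their
complements, according to the binary sequence `x`. -/
def h0cyl (x : ℕ → Bool) (n : ℕ) : Set ℕ :=
  {m : ℕ | ∀ k < n, (x k = true → m ∈ primeMultiples k) ∧
    (x k = false → m ∉ primeMultiples k)}

open Classical in
/-- The decreasing chain of infinite sets obtained by repeatedly intersecting
with `primeMultiples k` or its complement, whichever keeps the set infinite. -/
noncomputable def chainS (Y : Set ℕ) : ℕ → Set ℕ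
  | 0 => Y
  | n + 1 =>
    if (chainS Y n ∩ primeMultiples n).Infinite then chainS Y n ∩ primeMultiples n
    else chainS Y n \ primeMultiples n

open Classical in
noncomputable def chainX (Y : Set ℕ) (n : ℕ) : Bool :=
  decide ((chainS Y n ∩ primeMultiples n).Infinite)

lemma chainS_infinite (Y : Set ℕ) (hY : Y.Infinite) : ∀ n, (chainS Y n).Infinite := by
  intro n
  induction n with
  | zero => exact hY
  | succ n ih =>
    by_cases h : (chainS Y n ∩ primeMultiples n).Infinite
    · simpa [chainS, h]
    · have hdiff : (chainS Y n \ primeMultiples n).Infinite := by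
        by_contra hfin
        have : (chainS Y n).Finite := by
          have := (Set.not_infinite.mp h).union (Set.not_infinite.mp hfin)
          simpa [Set.inter_union_diff] using this
        exact ih this
      simpa [chainS, h]

lemma chainS_succ_subset (Y : Set ℕ) (n : ℕ) : chainS Y (n + 1) ⊆ chainS Y n := by
  by_cases h : (chainS Y n ∩ primeMultiples n).Infinite
  · simp only [chainS, if_pos h]; exact Set.inter_subset_left
  · simp only [chainS, if_neg h]; exact Set.diff_subset

lemma chainS_mono (Y : Set ℕ) {k n : ℕ} (h : k ≤ n) : chainS Y n ⊆ chainS Y k := by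
  induction n with
  | zero => simpa [Nat.le_zero.mp h]
  | succ n ih =>
    rcases Nat.lt_or_ge k (n + 1) with hk | hk
    · exact (chainS_succ_subset Y n).trans (ih (Nat.lt_succ_iff.mp hk))
    · have : k = n + 1 := le_antisymm h hk
      subst this; exact le_refl _

lemma chainS_subset_h0cyl (Y : Set ℕ) (n : ℕ) :
    chainS Y n ⊆ h0cyl (chainX Y) n := by
  intro m hm k hk
  have hmk : m ∈ chainS Y (k + 1) := chainS_mono Y hk hm
  by_cases h : (chainS Y k ∩ primeMultiples k).Infinite
  · have hx : chainX Y k = true := by simp [chainX, h]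
    rw [chainS, if_pos h] at hmk
    exact ⟨fun _ => hmk.2, fun hf => absurd hf (by simp [hx])⟩
  · have hx : chainX Y k = false := by simp [chainX, h]
    rw [chainS, if_neg h] at hmk
    exact ⟨fun ht => absurd ht (by simp [hx]), fun _ => hmk.2⟩

/-- For every infinite `Y ⊆ ℕ` there are `x ∈ {0,1}^ℕ` and an
infinite `Z ⊆ Y` with `Z ⊆* h₀([x|n])` for every `n`. -/
theorem stmt_19 (Y : Set ℕ) (hY : Y.Infinite) :
    ∃ (x : ℕ → Bool) (Z : Set ℕ), Z.Infinite ∧ Z ⊆ Y ∧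
      ∀ n : ℕ, (Z \ h0cyl x n).Finite := by
  have hchoice : ∀ n : ℕ, ∃ m, m ∈ chainS Y (n + 1) ∧ n < m := by
    intro n
    obtain ⟨m, hm, hlt⟩ := (chainS_infinite Y hY (n + 1)).exists_gt n
    exact ⟨m, hm, hlt⟩
  choose z hz hzgt using hchoice
  refine ⟨chainX Y, Set.range z, ?_, ?_, ?_⟩
  · apply Set.infinite_of_not_bddAbove
    rintro ⟨a, ha⟩
    exact absurd (ha ⟨a, rfl⟩) (not_le.mpr (hzgt a))
  · rintro _ ⟨m, rfl⟩
    exact chainS_mono Y (Nat.zero_le _) (hz m)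
  · intro n
    apply (Set.Finite.image z (Set.finite_Iio n)).subset
    rintro _ ⟨⟨m, rfl⟩, hnot⟩
    refine ⟨m, ?_, rfl⟩
    by_contra hmn
    have hmn' : n ≤ m := not_lt.mp hmn
    exact hnot (chainS_subset_h0cyl Y n (chainS_mono Y (hmn'.trans (Nat.le_succ m)) (hz m)))
end
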